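/- Let CS be an arbitrary constant specification for JNoC. The canonical model M^C = (W^C, W₀^C, V^C, E^C), where W^C is the power set of the set of all formulas, W₀^C is the set of maximal JNoC_CS-consistent sets of formulas, V^C(Γ,F) = 1 iff F ∈ Γ, and E^C(Γ,t) = {Δ ∈ W^C : Δ ⊇ Γ/t} with Γ/t = {F : t:F ∈ Γ}, is a NoC CS-subset model. -/

import Mathlib

/-!
A maximal consistent set `Γ` is deductively closed and contains exactly one of `A`, `¬A`,
so the truth clauses for `⊥` and `→` hold at `Γ`. Since `Γ/t` is itself a world of
`E(Γ, t)`, we have `E(Γ, t) ⊆ [A]` iff `t:A ∈ Γ`, and the conditions on sums, applications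
and constants become closure of `Γ` under the axioms j+, j and axiom necessitation. The
world `Γ/t` is noncontradictory by the axiom noc. Finally `W₀` is nonempty by Lindenbaum's
lemma: the empty set is consistent because reading every `t:F` as `F` turns each theorem
into a tautology.
-/

/-- Justification terms: constants, variables, application, sum, bang. -/
inductive Tm : Type
  | const : Nat → Tm
  | var   : Nat → Tm
  | app   : Tm → Tm → Tm
  | sum   : Tm → Tm → Tm
  | bang  : Tm → Tm

/-- Formulas of justification logic. -/
inductive Fm : Type
  | prop : Nat → Fm
  | bot  : Fm
  | imp  : Fm → Fm → Fm
  | just : Tm → Fm → Fm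

/-- ¬A := A → ⊥ -/
def Fm.neg (A : Fm) : Fm := Fm.imp A Fm.bot
/-- ⊤ := ¬⊥ -/
def Fm.top : Fm := Fm.neg Fm.bot
/-- A ∨ B := ¬A → B -/
def Fm.disj (A B : Fm) : Fm := Fm.imp (Fm.neg A) B
/-- A ∧ B := ¬(A → ¬B) -/
def Fm.conj (A B : Fm) : Fm := Fm.neg (Fm.imp A (Fm.neg B))

/-- A classical propositional tautology in this language: true under every
Boolean valuation that respects ⊥ and →, treating `t:F` and atoms as arbitrary atoms. -/
def IsTaut (A : Fm) : Prop :=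
  ∀ v : Fm → Bool,
    v Fm.bot = false →
    (∀ F G : Fm, v (Fm.imp F G) = (!(v F) || v G)) →
    v A = true

/-- !^n t -/
def bangIter : Nat → Tm → Tm
  | 0, t => t
  | n + 1, t => Tm.bang (bangIter n t)

/-- `anFm n c A` is the formula !^n c : !^{n-1} c : ... : !c : c : A. -/
def anFm : Nat → Tm → Fm → Fm
  | 0, c, A => Fm.just c A
  | n + 1, c, A => Fm.just (bangIter (n + 1) c) (anFm n c A)

/-- Axioms of JD: classical tautologies, j+, j, jd. -/
inductive JDAxiom : Fm → Prop
  | cl {A : Fm} : IsTaut A → JDAxiom A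
  | jplus (s t : Tm) (A : Fm) :
      JDAxiom (Fm.imp (Fm.disj (Fm.just s A) (Fm.just t A)) (Fm.just (Tm.sum s t) A))
  | j (s t : Tm) (A B : Fm) :
      JDAxiom (Fm.imp (Fm.just s (Fm.imp A B)) (Fm.imp (Fm.just t A) (Fm.just (Tm.app s t) B)))
  | jd (t : Tm) : JDAxiom (Fm.neg (Fm.just t Fm.bot))

/-- Axioms of JNoC: classical tautologies, j+, j, noc. -/
inductive JNoCAxiom : Fm → Prop
  | cl {A : Fm} : IsTaut A → JNoCAxiom A
  | jplus (s t : Tm) (A : Fm) :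
      JNoCAxiom (Fm.imp (Fm.disj (Fm.just s A) (Fm.just t A)) (Fm.just (Tm.sum s t) A))
  | j (s t : Tm) (A B : Fm) :
      JNoCAxiom (Fm.imp (Fm.just s (Fm.imp A B)) (Fm.imp (Fm.just t A) (Fm.just (Tm.app s t) B)))
  | noc (t : Tm) (A : Fm) :
      JNoCAxiom (Fm.neg (Fm.conj (Fm.just t A) (Fm.just t (Fm.neg A))))

/-- A constant specification for the logic with axioms `Ax`: a set of pairs (c, A)
where c is (the index of) a constant and A is an axiom. -/
def IsConstSpec (Ax : Fm → Prop) (CS : Set (Nat × Fm)) : Prop :=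
  ∀ p ∈ CS, Ax p.2

/-- CS is axiomatically appropriate: every axiom is justified by some constant. -/
def AxAppropriate (Ax : Fm → Prop) (CS : Set (Nat × Fm)) : Prop :=
  ∀ A : Fm, Ax A → ∃ c : Nat, (c, A) ∈ CS

/-- Hilbert-style derivability from axioms `Ax`, modus ponens, and axiom necessitation. -/
inductive Deriv (Ax : Fm → Prop) (CS : Set (Nat × Fm)) : Fm → Prop
  | ax {A : Fm} : Ax A → Deriv Ax CS A
  | mp {A B : Fm} : Deriv Ax CS (Fm.imp A B) → Deriv Ax CS A → Deriv Ax CS B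
  | an {c : Nat} {A : Fm} (n : Nat) : (c, A) ∈ CS → Deriv Ax CS (anFm n (Tm.const c) A)

/-- A subset-model frame: worlds, normal worlds, valuation, evidence function. -/
structure SModel where
  W : Type
  W0 : Set W
  V : W → Fm → Prop
  E : W → Tm → Set W

/-- Truth set [A]. -/
def SModel.ts (M : SModel) (A : Fm) : Set M.W := {w : M.W | M.V w A}

/-- APP_ω(s,t). -/
def SModel.APP (M : SModel) (ω : M.W) (s t : Tm) : Set Fm :=
  {F : Fm | ∃ H : Fm, M.E ω s ⊆ M.ts (Fm.imp H F) ∧ M.E ω t ⊆ M.ts H}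

/-- The conditions common to general, D-arbitrary and NoC CS-subset models. -/
def CoreConds (CS : Set (Nat × Fm)) (M : SModel) : Prop :=
  M.W0.Nonempty ∧
  ∀ ω ∈ M.W0,
    (¬ M.V ω Fm.bot) ∧
    (∀ F G : Fm, M.V ω (Fm.imp F G) ↔ (¬ M.V ω F ∨ M.V ω G)) ∧
    (∀ (t : Tm) (F : Fm), M.V ω (Fm.just t F) ↔ M.E ω t ⊆ M.ts F) ∧
    (∀ s t : Tm, M.E ω (Tm.sum s t) ⊆ M.E ω s ∩ M.E ω t) ∧
    (∀ s t : Tm, M.E ω (Tm.app s t) ⊆ {υ : M.W | ∀ F ∈ M.APP ω s t, υ ∈ M.ts F}) ∧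
    (∀ (c : Nat) (A : Fm), (c, A) ∈ CS →
      M.E ω (Tm.const c) ⊆ M.ts A ∧
      ∀ n : Nat, M.E ω (bangIter (n + 1) (Tm.const c)) ⊆ M.ts (anFm n (Tm.const c) A))

/-- General CS-subset model: every E(ω,t) meets the normal worlds. -/
def IsGeneralModel (CS : Set (Nat × Fm)) (M : SModel) : Prop :=
  CoreConds CS M ∧ ∀ ω ∈ M.W0, ∀ t : Tm, ∃ υ ∈ M.W0, υ ∈ M.E ω t

/-- D-arbitrary CS-subset model: every E(ω,t) meets W_{¬⊥}. -/
def IsDArbModel (CS : Set (Nat × Fm)) (M : SModel) : Prop :=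
  CoreConds CS M ∧ ∀ ω ∈ M.W0, ∀ t : Tm, ∃ υ : M.W, ¬ M.V υ Fm.bot ∧ υ ∈ M.E ω t

/-- NoC CS-subset model: every E(ω,t) meets W_nc. -/
def IsNoCModel (CS : Set (Nat × Fm)) (M : SModel) : Prop :=
  CoreConds CS M ∧ ∀ ω ∈ M.W0, ∀ t : Tm,
    ∃ υ : M.W, (∀ A : Fm, ¬ M.V υ A ∨ ¬ M.V υ (Fm.neg A)) ∧ υ ∈ M.E ω t

def GeneralValid (CS : Set (Nat × Fm)) (F : Fm) : Prop :=
  ∀ M : SModel, IsGeneralModel CS M → ∀ ω ∈ M.W0, M.V ω F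

def DArbValid (CS : Set (Nat × Fm)) (F : Fm) : Prop :=
  ∀ M : SModel, IsDArbModel CS M → ∀ ω ∈ M.W0, M.V ω F

def NoCValid (CS : Set (Nat × Fm)) (F : Fm) : Prop :=
  ∀ M : SModel, IsNoCModel CS M → ∀ ω ∈ M.W0, M.V ω F

/-- Γ is consistent: no finite list of members of Γ lets the logic derive ⊥
(i.e. A₁ → ... → Aₙ → ⊥ is not derivable for A₁,...,Aₙ ∈ Γ). -/
def ConsistentSet (Ax : Fm → Prop) (CS : Set (Nat × Fm)) (Γ : Set Fm) : Prop :=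
  ¬ ∃ L : List Fm, (∀ A ∈ L, A ∈ Γ) ∧ Deriv Ax CS (L.foldr Fm.imp Fm.bot)

/-- Maximal consistent: consistent and every proper superset is inconsistent. -/
def MaxConsistent (Ax : Fm → Prop) (CS : Set (Nat × Fm)) (Γ : Set Fm) : Prop :=
  ConsistentSet Ax CS Γ ∧ ∀ Δ : Set Fm, Γ ⊂ Δ → ¬ ConsistentSet Ax CS Δ

/-- The canonical model: worlds are arbitrary sets of formulas, normal worlds are
the maximal consistent sets, V^C(Γ,F)=1 iff F ∈ Γ, E^C(Γ,t) = {Δ : Δ ⊇ Γ/t}. -/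
def canonicalModel (Ax : Fm → Prop) (CS : Set (Nat × Fm)) : SModel where
  W := Set Fm
  W0 := {Γ : Set Fm | MaxConsistent Ax CS Γ}
  V := fun Γ F => F ∈ Γ
  E := fun Γ t => {Δ : Set Fm | {F : Fm | Fm.just t F ∈ Γ} ⊆ Δ}


theorem Fm.eval_foldr_imp (v : Fm → Bool) (himp : ∀ F G, v (Fm.imp F G) = (!v F || v G))
    (L : List Fm) (B : Fm) : v (L.foldr Fm.imp B) = (!L.all v || v B) := by
  induction L with
  | nil => simp
  | cons A L ih =>
    simp only [List.foldr_cons, himp, ih, List.all_cons]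
    cases v A <;> simp

section ProofTheory

variable {Ax : Fm → Prop} {CS : Set (Nat × Fm)} {Γ : Set Fm} {A B : Fm}

def Proves (Ax : Fm → Prop) (CS : Set (Nat × Fm)) (Γ : Set Fm) (A : Fm) : Prop :=
  ∃ L : List Fm, (∀ B ∈ L, B ∈ Γ) ∧ Deriv Ax CS (L.foldr Fm.imp A)

namespace Proves

theorem of_deriv (h : Deriv Ax CS A) : Proves Ax CS Γ A := ⟨[], by simp, h⟩

theorem of_mem (hcl : ∀ {A}, IsTaut A → Ax A) (h : A ∈ Γ) : Proves Ax CS Γ A :=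
  ⟨[A], by simpa using h, .ax (hcl fun v _ himp => by simp [himp])⟩

theorem mp (hcl : ∀ {A}, IsTaut A → Ax A) (hAB : Proves Ax CS Γ (A.imp B))
    (hA : Proves Ax CS Γ A) : Proves Ax CS Γ B := by
  obtain ⟨L₁, hL₁, hd₁⟩ := hAB
  obtain ⟨L₂, hL₂, hd₂⟩ := hA
  have htaut : IsTaut ((L₁.foldr Fm.imp (A.imp B)).imp
      ((L₂.foldr Fm.imp A).imp ((L₁ ++ L₂).foldr Fm.imp B))) := by
    intro v _ himp
    simp only [himp, Fm.eval_foldr_imp v himp, List.all_append]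
    cases L₁.all v <;> cases L₂.all v <;> cases v A <;> cases v B <;> simp
  refine ⟨L₁ ++ L₂, fun C hC => ?_, .mp (.mp (.ax (hcl htaut)) hd₁) hd₂⟩
  exact (List.mem_append.mp hC).elim (hL₁ C) (hL₂ C)

theorem imp_of_insert (hcl : ∀ {A}, IsTaut A → Ax A) (h : Proves Ax CS (insert A Γ) B) :
    Proves Ax CS Γ (A.imp B) := by
  classical
  obtain ⟨L, hL, hd⟩ := h
  -- The hypotheses in `L` outside `Γ` are all `A`, which moves into the conclusion.
  have htaut : IsTaut ((L.foldr Fm.imp B).imp ((L.filter (· ∈ Γ)).foldr Fm.imp (A.imp B))) := by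
    intro v _ himp
    have hall : (L.filter (· ∈ Γ)).all v = true → v A = true → L.all v = true := by
      intro hΓ hA
      simp only [List.all_eq_true, List.mem_filter, decide_eq_true_eq] at hΓ ⊢
      intro C hC
      rcases hL C hC with rfl | hCΓ
      exacts [hA, hΓ C ⟨hC, hCΓ⟩]
    simp only [himp, Fm.eval_foldr_imp v himp]
    cases h₁ : (L.filter (· ∈ Γ)).all v <;> cases h₂ : v A <;> simp [hall, h₁, h₂]
  refine ⟨_, fun C hC => ?_, .mp (.ax (hcl htaut)) hd⟩
  exact of_decide_eq_true (List.mem_filter.mp hC).2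

end Proves

theorem ConsistentSet.exists_maxConsistent_superset (h : ConsistentSet Ax CS Γ) :
    ∃ Δ, Γ ⊆ Δ ∧ MaxConsistent Ax CS Δ := by
  have hchains : ∀ c ⊆ {Δ | ConsistentSet Ax CS Δ}, IsChain (· ⊆ ·) c → c.Nonempty →
      ConsistentSet Ax CS (⋃₀ c) := by
    rintro c hc hchain hne ⟨L, hL, hd⟩
    obtain ⟨Δ, hΔc, hLΔ⟩ := hchain.directedOn.exists_mem_subset_of_finite_of_subset_sUnion
      hne L.finite_toSet hL
    exact hc hΔc ⟨L, hLΔ, hd⟩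
  obtain ⟨Δ, hΓΔ, hmax⟩ := zorn_subset_nonempty {Δ | ConsistentSet Ax CS Δ}
    (fun c hc hchain hne => ⟨_, hchains c hc hchain hne, fun _ => Set.subset_sUnion_of_mem⟩)
    Γ h
  exact ⟨Δ, hΓΔ, hmax.prop, fun Δ' hΔ' hcons => hΔ'.not_subset (hmax.2 hcons hΔ'.subset)⟩

namespace MaxConsistent

theorem mem_of_proves (hcl : ∀ {A}, IsTaut A → Ax A) (hΓ : MaxConsistent Ax CS Γ)
    (h : Proves Ax CS Γ A) : A ∈ Γ := by
  by_contra hA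
  obtain ⟨L, hL, hd⟩ := not_not.mp (hΓ.2 _ (Set.ssubset_insert hA))
  exact hΓ.1 (Proves.mp hcl (Proves.imp_of_insert hcl ⟨L, hL, hd⟩) h)

theorem deriv_mem (hcl : ∀ {A}, IsTaut A → Ax A) (hΓ : MaxConsistent Ax CS Γ)
    (h : Deriv Ax CS A) : A ∈ Γ :=
  hΓ.mem_of_proves hcl (.of_deriv h)

theorem bot_notMem (hcl : ∀ {A}, IsTaut A → Ax A) (hΓ : MaxConsistent Ax CS Γ) :
    Fm.bot ∉ Γ :=
  fun h => hΓ.1 (Proves.of_mem hcl h)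

theorem imp_mem_iff (hcl : ∀ {A}, IsTaut A → Ax A) (hΓ : MaxConsistent Ax CS Γ) :
    A.imp B ∈ Γ ↔ A ∉ Γ ∨ B ∈ Γ := by
  refine ⟨fun h => or_iff_not_imp_left.mpr fun hA => ?_, fun h => hΓ.mem_of_proves hcl ?_⟩
  · exact hΓ.mem_of_proves hcl (.mp hcl (.of_mem hcl h) (.of_mem hcl (not_not.mp hA)))
  rcases h with hA | hB
  · obtain ⟨L, hL, hd⟩ := not_not.mp (hΓ.2 _ (Set.ssubset_insert hA))
    refine Proves.imp_of_insert hcl (.mp hcl (.of_deriv (.ax (hcl ?_))) ⟨L, hL, hd⟩)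
    intro v hbot himp
    simp [himp, hbot]
  · refine .mp hcl (.of_deriv (.ax (hcl ?_))) (.of_mem hcl hB)
    intro v _ himp
    simp only [himp]
    cases v A <;> cases v B <;> simp

theorem mem_of_imp_mem (hcl : ∀ {A}, IsTaut A → Ax A) (hΓ : MaxConsistent Ax CS Γ)
    (hAB : A.imp B ∈ Γ) (hA : A ∈ Γ) : B ∈ Γ :=
  ((hΓ.imp_mem_iff hcl).mp hAB).resolve_left (not_not.mpr hA)

theorem neg_mem_iff (hcl : ∀ {A}, IsTaut A → Ax A) (hΓ : MaxConsistent Ax CS Γ) :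
    A.neg ∈ Γ ↔ A ∉ Γ := by
  simp [Fm.neg, hΓ.imp_mem_iff hcl, hΓ.bot_notMem hcl]

theorem conj_mem_iff (hcl : ∀ {A}, IsTaut A → Ax A) (hΓ : MaxConsistent Ax CS Γ) :
    A.conj B ∈ Γ ↔ A ∈ Γ ∧ B ∈ Γ := by
  simp [Fm.conj, hΓ.neg_mem_iff hcl, hΓ.imp_mem_iff hcl]

theorem disj_mem_iff (hcl : ∀ {A}, IsTaut A → Ax A) (hΓ : MaxConsistent Ax CS Γ) :
    A.disj B ∈ Γ ↔ A ∈ Γ ∨ B ∈ Γ := by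
  simp [Fm.disj, hΓ.neg_mem_iff hcl, hΓ.imp_mem_iff hcl]

end MaxConsistent

end ProofTheory

section JNoC

variable {CS : Set (Nat × Fm)} {Γ : Set Fm} {A B : Fm}

/-- Reading `t:F` as `F` validates every JNoC axiom: noc becomes `¬(A ∧ ¬A)`. -/
def Fm.evalCollapse : Fm → Bool
  | .prop _ => true
  | .bot => false
  | .imp F G => !F.evalCollapse || G.evalCollapse
  | .just _ F => F.evalCollapse

theorem Fm.evalCollapse_anFm (n : Nat) (c : Tm) (A : Fm) :
    (anFm n c A).evalCollapse = A.evalCollapse := by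
  induction n with
  | zero => rfl
  | succ n ih => exact ih

theorem JNoCAxiom.evalCollapse (h : JNoCAxiom A) : A.evalCollapse = true := by
  cases h with
  | cl h => exact h _ rfl fun _ _ => rfl
  | jplus s t A => simp only [Fm.disj, Fm.neg, Fm.evalCollapse]; cases A.evalCollapse <;> rfl
  | j s t A B =>
    simp only [Fm.evalCollapse]; cases A.evalCollapse <;> cases B.evalCollapse <;> rfl
  | noc t A => simp only [Fm.conj, Fm.neg, Fm.evalCollapse]; cases A.evalCollapse <;> rfl

theorem Deriv.evalCollapse (hCS : IsConstSpec JNoCAxiom CS) (h : Deriv JNoCAxiom CS A) :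
    A.evalCollapse = true := by
  induction h with
  | ax h => exact h.evalCollapse
  | mp _ _ ihAB ihA => simpa [Fm.evalCollapse, ihA] using ihAB
  | an n hc => exact (Fm.evalCollapse_anFm n _ _).trans (hCS _ hc).evalCollapse

theorem consistentSet_empty (hCS : IsConstSpec JNoCAxiom CS) :
    ConsistentSet JNoCAxiom CS ∅ := by
  rintro ⟨L, hL, hd⟩
  obtain rfl : L = [] := List.eq_nil_iff_forall_not_mem.mpr hL
  simpa [Fm.evalCollapse] using hd.evalCollapse hCS

namespace MaxConsistent

theorem just_sum_mem (hΓ : MaxConsistent JNoCAxiom CS Γ) {s t : Tm}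
    (h : Fm.just s A ∈ Γ ∨ Fm.just t A ∈ Γ) : Fm.just (.sum s t) A ∈ Γ :=
  hΓ.mem_of_imp_mem JNoCAxiom.cl (hΓ.deriv_mem JNoCAxiom.cl (.ax (.jplus s t A)))
    ((hΓ.disj_mem_iff JNoCAxiom.cl).mpr h)

theorem just_app_mem (hΓ : MaxConsistent JNoCAxiom CS Γ) {s t : Tm}
    (hs : Fm.just s (A.imp B) ∈ Γ) (ht : Fm.just t A ∈ Γ) : Fm.just (.app s t) B ∈ Γ := by
  have hj := hΓ.deriv_mem JNoCAxiom.cl (.ax (.j s t A B))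
  exact hΓ.mem_of_imp_mem JNoCAxiom.cl (hΓ.mem_of_imp_mem JNoCAxiom.cl hj hs) ht

theorem not_just_mem_and_just_neg_mem (hΓ : MaxConsistent JNoCAxiom CS Γ) (t : Tm) :
    ¬(Fm.just t A ∈ Γ ∧ Fm.just t A.neg ∈ Γ) := by
  rw [← hΓ.conj_mem_iff JNoCAxiom.cl, ← hΓ.neg_mem_iff JNoCAxiom.cl]
  exact hΓ.deriv_mem JNoCAxiom.cl (.ax (.noc t A))

end MaxConsistent

end JNoC

section CanonicalModel

variable {Ax : Fm → Prop} {CS : Set (Nat × Fm)} {Γ : Set Fm}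

theorem canonicalModel_self_mem_E (t : Tm) :
    ({F | Fm.just t F ∈ Γ} : Set Fm) ∈ (canonicalModel Ax CS).E Γ t :=
  fun _ h => h

theorem canonicalModel_E_subset_ts_iff {t : Tm} {A : Fm} :
    (canonicalModel Ax CS).E Γ t ⊆ (canonicalModel Ax CS).ts A ↔ Fm.just t A ∈ Γ :=
  ⟨fun h => h (canonicalModel_self_mem_E t), fun h _ hΔ => hΔ h⟩

theorem canonicalModel_E_subset_E {s u : Tm}
    (h : ∀ A, Fm.just s A ∈ Γ → Fm.just u A ∈ Γ) :
    (canonicalModel Ax CS).E Γ u ⊆ (canonicalModel Ax CS).E Γ s :=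
  fun _ hΔ A hA => hΔ (h A hA)

theorem canonicalModel_coreConds (hCS : IsConstSpec JNoCAxiom CS) :
    CoreConds CS (canonicalModel JNoCAxiom CS) := by
  obtain ⟨Γ₀, -, hΓ₀⟩ := (consistentSet_empty hCS).exists_maxConsistent_superset
  refine ⟨⟨Γ₀, hΓ₀⟩, fun Γ (hΓ : MaxConsistent JNoCAxiom CS Γ) =>
    ⟨hΓ.bot_notMem JNoCAxiom.cl, fun F G => hΓ.imp_mem_iff JNoCAxiom.cl,
      fun t F => canonicalModel_E_subset_ts_iff.symm, fun s t => ?_, fun s t => ?_,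
      fun c A hc => ⟨?_, fun n => ?_⟩⟩⟩
  · exact Set.subset_inter (canonicalModel_E_subset_E fun A h => hΓ.just_sum_mem (.inl h))
      (canonicalModel_E_subset_E fun A h => hΓ.just_sum_mem (.inr h))
  · rintro Δ hΔ F ⟨H, hs, ht⟩
    exact hΔ (hΓ.just_app_mem (canonicalModel_E_subset_ts_iff.mp hs)
      (canonicalModel_E_subset_ts_iff.mp ht))
  · exact canonicalModel_E_subset_ts_iff.mpr (hΓ.deriv_mem JNoCAxiom.cl (.an 0 hc))
  · exact canonicalModel_E_subset_ts_iff.mpr (hΓ.deriv_mem JNoCAxiom.cl (.an (n + 1) hc))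

end CanonicalModel

/-- The canonical model for JNoC_CS is a NoC CS-subset model, for arbitrary CS. -/
theorem stmt_8 (CS : Set (Nat × Fm)) (hCS : IsConstSpec JNoCAxiom CS) :
    IsNoCModel CS (canonicalModel JNoCAxiom CS) :=
  ⟨canonicalModel_coreConds hCS, fun (Γ : Set Fm) (hΓ : MaxConsistent JNoCAxiom CS Γ) t =>
    ⟨{F | Fm.just t F ∈ Γ}, fun _ => not_and_or.mp (hΓ.not_just_mem_and_just_neg_mem t),
      canonicalModel_self_mem_E t⟩⟩
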